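/- arXiv:1609.00955 — 6 statements merged into one kernel-verified Lean document; each statement's English description precedes it below -/
import Mathlib

section
/- Every nonzero submodule of a nonzero comultiplication module contains a minimal submodule; in particular, the set of minimal submodules is nonempty. -/
/-- `M` is a comultiplication `R`-module: every submodule is of the form `(0 :_M I)`. -/
def IsComultiplication (R M : Type*) [CommRing R] [AddCommGroup M] [Module R M] : Prop :=
  ∀ N : Submodule R M, ∃ I : Ideal R, ∀ m : M, m ∈ N ↔ ∀ r ∈ I, r • m = 0

/-- A submodule is large (essential) if it meets every nonzero submodule nontrivially. -/
def IsLarge {R M : Type*} [CommRing R] [AddCommGroup M] [Module R M]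
    (N : Submodule R M) : Prop :=
  ∀ L : Submodule R M, L ≠ ⊥ → N ⊓ L ≠ ⊥

/-!
Pick `x ≠ 0` in `N` and a maximal ideal `P ⊇ ann(x)`. Then `x ∉ P • Rx`, and writing
`P • Rx = (0 :_M I)` gives some `b ∈ I` with `b • x ≠ 0` but `b • P • x = 0`. Hence
`ann(b • x) = P`, so `R ∙ (b • x) ≅ R ⧸ P` is simple, i.e. an atom below `N`.
-/

section

variable {R M : Type*} [CommRing R] [AddCommGroup M] [Module R M]

theorem isAtom_span_singleton_of_le_torsionOf {P : Ideal R} (hP : P.IsMaximal) {y : M}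
    (hy : y ≠ 0) (hPy : P ≤ Ideal.torsionOf R M y) : IsAtom (R ∙ y) := by
  have hne_top : Ideal.torsionOf R M y ≠ ⊤ := (Ideal.torsionOf_eq_top_iff R y).not.mpr hy
  have heq : Ideal.torsionOf R M y = P := (hP.eq_of_le hne_top hPy).symm
  have : IsSimpleModule R (R ⧸ Ideal.torsionOf R M y) :=
    isSimpleModule_iff_isCoatom.mpr (heq ▸ Ideal.isMaximal_def.mp hP)
  exact isSimpleModule_iff_isAtom.mp
    (IsSimpleModule.congr (Ideal.quotTorsionOfEquivSpanSingleton R M y).symm)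

theorem notMem_smul_span_singleton_of_torsionOf_le {P : Ideal R} (hP : P ≠ ⊤) {x : M}
    (hxP : Ideal.torsionOf R M x ≤ P) : x ∉ P • (R ∙ x) := by
  rintro hx
  obtain ⟨p, hp, hpx⟩ := Submodule.mem_smul_span_singleton.mp hx
  have h1p : 1 - p ∈ P := hxP <| by
    rw [Ideal.mem_torsionOf_iff, sub_smul, one_smul, hpx, sub_self]
  exact hP ((Ideal.eq_top_iff_one P).mpr (by simpa using P.add_mem h1p hp))

theorem IsComultiplication.exists_smul_ne_zero_of_notMem (hc : IsComultiplication R M)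
    {K : Submodule R M} {x : M} (hx : x ∉ K) : ∃ b : R, b • x ≠ 0 ∧ ∀ k ∈ K, b • k = 0 := by
  obtain ⟨I, hI⟩ := hc K
  obtain ⟨b, hbI, hbx⟩ := not_forall₂.mp (mt (hI x).mpr hx)
  exact ⟨b, hbx, fun k hk => (hI k).mp hk b hbI⟩

theorem IsComultiplication.exists_isAtom_le (hc : IsComultiplication R M)
    {N : Submodule R M} (hN : N ≠ ⊥) : ∃ S : Submodule R M, IsAtom S ∧ S ≤ N := by
  obtain ⟨x, hxN, hx0⟩ := Submodule.exists_mem_ne_zero_of_ne_bot hN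
  obtain ⟨P, hP, hxP⟩ :=
    Ideal.exists_le_maximal _ ((Ideal.torsionOf_eq_top_iff R x).not.mpr hx0)
  obtain ⟨b, hbx, hb⟩ :=
    hc.exists_smul_ne_zero_of_notMem (notMem_smul_span_singleton_of_torsionOf_le hP.ne_top hxP)
  have hPbx : P ≤ Ideal.torsionOf R M (b • x) := fun p hp => by
    rw [Ideal.mem_torsionOf_iff, smul_comm]
    exact hb _ (Submodule.mem_smul_span_singleton.mpr ⟨p, hp, rfl⟩)
  exact ⟨_, isAtom_span_singleton_of_le_torsionOf hP hbx hPbx,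
    (Submodule.span_singleton_le_iff_mem _ N).mpr (N.smul_mem b hxN)⟩

end

/-- Every nonzero submodule of a nonzero comultiplication module contains a minimal
submodule; in particular the set of minimal submodules is nonempty. -/
theorem stmt0 {R M : Type*} [CommRing R] [AddCommGroup M] [Module R M]
    [Nontrivial M] (hc : IsComultiplication R M) :
    (∀ N : Submodule R M, N ≠ ⊥ → ∃ S : Submodule R M, IsAtom S ∧ S ≤ N) ∧
      {S : Submodule R M | IsAtom S}.Nonempty := by
  refine ⟨fun N hN => hc.exists_isAtom_le hN, ?_⟩
  obtain ⟨S, hS, -⟩ := hc.exists_isAtom_le (top_ne_bot : (⊤ : Submodule R M) ≠ ⊥)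
  exact ⟨S, hS⟩
end

section
/- Let M be a nonzero comultiplication R-module with more than one minimal submodule, and let Λ be a nonempty finite proper subset of the set of minimal submodules of M. Then the sum of the minimal submodules in Λ is not a large submodule of M. -/
/-!
If the sum of the atoms in `Λ` met an atom `S ∉ Λ`, then `S` would lie below that sum, so the
intersection of the annihilators of the members of `Λ` would lie in `Ann S`. The annihilator of
a simple module is maximal, hence prime, so by prime avoidance `Ann T ≤ Ann S` for some `T ∈ Λ`.
In a comultiplication module every submodule is determined by its annihilator, so `S ≤ T`,
and `S = T` since both are atoms — a contradiction.
-/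

theorem Submodule.annihilator_finset_sup {R M ι : Type*} [CommRing R] [AddCommGroup M]
    [Module R M] (s : Finset ι) (f : ι → Submodule R M) :
    (s.sup f).annihilator = s.inf fun i => (f i).annihilator := by
  simp only [Finset.sup_eq_iSup, Finset.inf_eq_iInf, Submodule.annihilator_iSup]

namespace IsComultiplication

variable {R M : Type*} [CommRing R] [AddCommGroup M] [Module R M]

theorem le_of_annihilator_le (hc : IsComultiplication R M) {N P : Submodule R M}
    (h : P.annihilator ≤ N.annihilator) : N ≤ P := by
  obtain ⟨I, hI⟩ := hc P
  have hIP : I ≤ P.annihilator :=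
    fun r hr => Submodule.mem_annihilator.2 fun p hp => (hI p).1 hp r hr
  exact fun m hm => (hI m).2 fun r hr => Submodule.mem_annihilator.1 (h (hIP hr)) m hm

theorem exists_le_of_isAtom_le_finset_sup (hc : IsComultiplication R M) {ι : Type*}
    {S : Submodule R M} (hS : IsAtom S) {s : Finset ι} {f : ι → Submodule R M}
    (hSle : S ≤ s.sup f) : ∃ i ∈ s, S ≤ f i := by
  have : IsSimpleModule R S := isSimpleModule_iff_isAtom.2 hS
  have hprime : S.annihilator.IsPrime := IsSimpleModule.annihilator_isMaximal.isPrime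
  have hinf : s.inf (fun i => (f i).annihilator) ≤ S.annihilator :=
    (Submodule.annihilator_finset_sup s f).ge.trans (Submodule.annihilator_mono hSle)
  obtain ⟨i, hi, hann⟩ := hprime.inf_le'.1 hinf
  exact ⟨i, hi, hc.le_of_annihilator_le hann⟩

theorem disjoint_finset_sup_of_isAtom (hc : IsComultiplication R M) {Λ : Finset (Submodule R M)}
    (hΛ : ∀ T ∈ Λ, IsAtom T) {S : Submodule R M} (hS : IsAtom S) (hSΛ : S ∉ Λ) :
    Disjoint S (Λ.sup id) := by
  refine hS.not_le_iff_disjoint.1 fun hSle => hSΛ ?_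
  obtain ⟨T, hT, hST⟩ := hc.exists_le_of_isAtom_le_finset_sup hS hSle
  rwa [((hΛ T hT).le_iff.1 hST).resolve_left hS.1]

end IsComultiplication

theorem stmt3_general {R M : Type*} [CommRing R] [AddCommGroup M] [Module R M]
    (hc : IsComultiplication R M)
    (Λ : Finset (Submodule R M))
    (hΛ : (↑Λ : Set (Submodule R M)) ⊂ {S : Submodule R M | IsAtom S}) :
    ¬ IsLarge (Λ.sup id) := by
  intro hlarge
  obtain ⟨S, hS, hSΛ⟩ := Set.exists_of_ssubset hΛ
  have hdisj := hc.disjoint_finset_sup_of_isAtom (fun T hT => hΛ.1 hT) hS (by exact_mod_cast hSΛ)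
  exact hlarge S hS.1 hdisj.symm.eq_bot

/-- If a nonzero comultiplication module has more than one minimal submodule and `Λ` is a
nonempty finite proper subset of the minimal submodules, then the sum of the members of `Λ`
is not large. -/
theorem stmt3 {R M : Type*} [CommRing R] [AddCommGroup M] [Module R M]
    [Nontrivial M] (hc : IsComultiplication R M)
    (S₁ S₂ : Submodule R M) (hS₁ : IsAtom S₁) (hS₂ : IsAtom S₂) (hne : S₁ ≠ S₂)
    (Λ : Finset (Submodule R M)) (hΛne : Λ.Nonempty)
    (hΛ : (↑Λ : Set (Submodule R M)) ⊂ {S : Submodule R M | IsAtom S}) :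
    ¬ IsLarge (Λ.sup id) :=
  stmt3_general hc Λ hΛ
end

section
/- Let M be a nonzero comultiplication R-module. The large sum graph Ǵ(M) has no vertices (i.e., M has no nonzero non-large submodules) if and only if M is cocyclic. -/
/-- The vertices of the large sum graph: nonzero non-large submodules. -/
abbrev LargeSumVtx (R M : Type*) [CommRing R] [AddCommGroup M] [Module R M] :=
  {N : Submodule R M // N ≠ ⊥ ∧ ¬ IsLarge N}

/-- The large sum graph: distinct nonzero non-large submodules `N, K` are adjacent
iff `N + K` is not large. -/
def largeSumGraph (R M : Type*) [CommRing R] [AddCommGroup M] [Module R M] :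
    SimpleGraph (LargeSumVtx R M) where
  Adj N K := N ≠ K ∧ ¬ IsLarge (N.1 ⊔ K.1)
  symm := ⟨fun a b ⟨h1, h2⟩ => ⟨h1.symm, by rwa [sup_comm]⟩⟩
  loopless := ⟨fun a h => h.1 rfl⟩

/-! The submodule lattice of a comultiplication module is atomic: below `m ≠ 0` one finds a
nonzero multiple of `m` killed by a maximal ideal, which spans a simple submodule. In an atomic
lattice, "every nonzero element is essential" forces any two atoms to meet, hence to coincide, so
the socle is that single atom; conversely an essential atom lies below every nonzero element. -/

section Lattice

variable {α : Type*} [CompleteLattice α]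

theorem sSup_setOf_isAtom_eq {a : α} (ha : IsAtom a)
    (h : ∀ x : α, x ≠ ⊥ → ∀ y : α, y ≠ ⊥ → x ⊓ y ≠ ⊥) : sSup {b : α | IsAtom b} = a := by
  have hatoms : {b : α | IsAtom b} = {a} := by
    ext b
    refine ⟨fun hb => ?_, fun hb => hb ▸ ha⟩
    have hba : b ≤ a := hb.not_disjoint_iff_le.mp (by
      rw [disjoint_iff, inf_comm]; exact h a ha.1 b hb.1)
    exact (ha.le_iff.mp hba).resolve_left hb.1
  rw [hatoms, sSup_singleton]

theorem forall_inf_ne_bot_iff_isAtom_sSup [IsAtomic α] [Nontrivial α] :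
    (∀ x : α, x ≠ ⊥ → ∀ y : α, y ≠ ⊥ → x ⊓ y ≠ ⊥) ↔
      IsAtom (sSup {b : α | IsAtom b}) ∧ ∀ y : α, y ≠ ⊥ → sSup {b : α | IsAtom b} ⊓ y ≠ ⊥ := by
  constructor
  · intro h
    obtain ⟨a, ha, -⟩ := (eq_bot_or_exists_atom_le (⊤ : α)).resolve_left top_ne_bot
    rw [sSup_setOf_isAtom_eq ha h]
    exact ⟨ha, h a ha.1⟩
  · rintro ⟨hs, hess⟩ x hx y hy hxy
    have hle : ∀ z : α, z ≠ ⊥ → sSup {b : α | IsAtom b} ≤ z := fun z hz =>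
      hs.not_disjoint_iff_le.mp (by rw [disjoint_iff]; exact hess z hz)
    exact hs.1 (le_bot_iff.mp (hxy ▸ le_inf (hle x hx) (hle y hy)))

end Lattice

section Module

variable {R M : Type*} [CommRing R] [AddCommGroup M] [Module R M]

theorem isAtom_span_singleton_of_isMaximal_torsionOf {x : M}
    (h : (Ideal.torsionOf R M x).IsMaximal) : IsAtom (R ∙ x) := by
  have : IsSimpleModule R (R ⧸ Ideal.torsionOf R M x) :=
    isSimpleModule_iff_isCoatom.mpr (Ideal.isMaximal_def.mp h)
  exact isSimpleModule_iff_isAtom.mp (.congr (Ideal.quotTorsionOfEquivSpanSingleton R M x).symm)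

theorem notMem_smul_span_singleton_of_torsionOf_le_s4 {I : Ideal R} {m : M} (hI : I ≠ ⊤)
    (h : Ideal.torsionOf R M m ≤ I) : m ∉ I • (R ∙ m) := by
  rw [Submodule.mem_smul_span_singleton]
  rintro ⟨r, hr, hrm⟩
  have : 1 - r ∈ I := h <| by rw [Ideal.mem_torsionOf_iff, sub_smul, one_smul, hrm, sub_self]
  exact hI ((Ideal.eq_top_iff_one I).mpr (by simpa using I.add_mem this hr))

namespace IsComultiplication

theorem exists_smul_ne_zero_of_notMem_s4 (hc : IsComultiplication R M) {N : Submodule R M} {m : M}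
    (hm : m ∉ N) : ∃ a : R, a • m ≠ 0 ∧ ∀ n ∈ N, a • n = 0 := by
  obtain ⟨I, hI⟩ := hc N
  obtain ⟨a, haI, ham⟩ : ∃ a ∈ I, a • m ≠ 0 := by
    by_contra! h
    exact hm ((hI m).mpr h)
  exact ⟨a, ham, fun n hn => (hI n).mp hn a haI⟩

/-- With `𝔪 ⊇ ann m` maximal, some `a` kills `𝔪 • (R ∙ m)` but not `m`; then `a • m ≠ 0` is
annihilated by `𝔪`. -/
theorem exists_isAtom_span_singleton_le (hc : IsComultiplication R M) {m : M} (hm : m ≠ 0) :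
    ∃ x ∈ R ∙ m, IsAtom (R ∙ x) := by
  obtain ⟨𝔪, hmax, hle⟩ :=
    Ideal.exists_le_maximal _ ((Ideal.torsionOf_eq_top_iff R m).not.mpr hm)
  obtain ⟨a, ham, hkill⟩ :=
    hc.exists_smul_ne_zero_of_notMem_s4 (notMem_smul_span_singleton_of_torsionOf_le_s4 hmax.ne_top hle)
  refine ⟨a • m, Submodule.smul_mem _ a (Submodule.mem_span_singleton_self m),
    isAtom_span_singleton_of_isMaximal_torsionOf ?_⟩
  refine (hmax.eq_of_le ((Ideal.torsionOf_eq_top_iff R _).not.mpr ham) fun r hr => ?_) ▸ hmax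
  rw [Ideal.mem_torsionOf_iff, smul_comm]
  exact hkill _ (Submodule.smul_mem_smul hr (Submodule.mem_span_singleton_self m))

theorem isAtomic (hc : IsComultiplication R M) : IsAtomic (Submodule R M) := by
  refine ⟨fun N => or_iff_not_imp_left.mpr fun hN => ?_⟩
  obtain ⟨m, hmN, hm⟩ := Submodule.exists_mem_ne_zero_of_ne_bot hN
  obtain ⟨x, hxm, hx⟩ := hc.exists_isAtom_span_singleton_le hm
  exact ⟨R ∙ x, hx, (Submodule.span_singleton_le_iff_mem x N).mpr
    ((Submodule.span_singleton_le_iff_mem m N).mpr hmN hxm)⟩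

end IsComultiplication

end Module

theorem isEmpty_largeSumVtx_iff {R M : Type*} [CommRing R] [AddCommGroup M] [Module R M] :
    IsEmpty (LargeSumVtx R M) ↔ ∀ N : Submodule R M, N ≠ ⊥ → IsLarge N := by
  simp only [isEmpty_subtype, not_and, not_not]

/-- The large sum graph of a nonzero comultiplication module has no vertices iff the module is
cocyclic, i.e. its socle is simple and large. -/
theorem stmt4 {R M : Type*} [CommRing R] [AddCommGroup M] [Module R M]
    [Nontrivial M] (hc : IsComultiplication R M) :
    IsEmpty (LargeSumVtx R M) ↔
      IsAtom (sSup {S : Submodule R M | IsAtom S}) ∧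
        IsLarge (sSup {S : Submodule R M | IsAtom S}) := by
  have := hc.isAtomic
  rw [isEmpty_largeSumVtx_iff]
  exact forall_inf_ne_bot_iff_isAtom_sSup (α := Submodule R M)
end

section
/- Let M be a nonzero comultiplication R-module whose large sum graph Ǵ(M) is connected (and non-null). Then the diameter of Ǵ(M) is at most 2. -/
/-!
In a comultiplication module, a submodule `W` missing both `N` and `K` also misses `N + K`:
for `x + y ∈ W` with `x ∈ N`, `y ∈ K`, the cyclic submodule `R (x + y)` is an annihilator
submodule containing `x`, which yields scalars fixing `x + y` and killing `x`, resp. `y`.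
So `N + K` fails to be large exactly when some nonzero submodule misses both `N` and `K`.

Hence two vertices `u, v` with `u ∩ v ≠ 0` are at distance at most `2` (via `u ∩ v`), and a
path `u - p - a - v` with `u ∩ v = 0` and `u + a`, `p + v` large is impossible: a nonzero `D`
missing `p` and `a` must meet `u`, and `D ∩ u` misses both `p` and `v`. Propagating the bound
along a walk gives the theorem.
-/

section Module

variable {R M : Type*} [CommRing R] [AddCommGroup M] [Module R M]

theorem not_isLarge_iff {N : Submodule R M} : ¬ IsLarge N ↔ ∃ L ≠ ⊥, Disjoint N L := by
  simp [IsLarge, disjoint_iff]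

theorem IsLarge.mono {N K : Submodule R M} (hNK : N ≤ K) (hN : IsLarge N) : IsLarge K := by
  by_contra hK
  obtain ⟨L, hL, hKL⟩ := not_isLarge_iff.1 hK
  exact not_isLarge_iff.2 ⟨L, hL, hKL.mono_left hNK⟩ hN

namespace IsComultiplication

theorem exists_smul_eq_self_and_smul_eq_zero (hc : IsComultiplication R M)
    {u v : Submodule R M} (huv : Disjoint u v) {x y : M} (hx : x ∈ u) (hy : y ∈ v) :
    ∃ r : R, r • x = x ∧ r • y = 0 := by
  obtain ⟨I, hI⟩ := hc (Submodule.span R {x + y})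
  have hxy : x ∈ Submodule.span R {x + y} := (hI x).2 fun r hr ↦ by
    have hkill : r • x + r • y = 0 := by
      rw [← smul_add]
      exact (hI _).1 (Submodule.mem_span_singleton_self _) r hr
    exact Submodule.disjoint_def'.1 huv _ (u.smul_mem r hx) _ (v.neg_mem (v.smul_mem r hy))
      (eq_neg_of_add_eq_zero_left hkill)
  obtain ⟨r, hr⟩ := Submodule.mem_span_singleton.1 hxy
  have hsplit : r • x - x = -(r • y) :=
    eq_neg_of_add_eq_zero_left (by rw [sub_add_eq_add_sub, ← smul_add, hr, sub_self])
  have hzero : r • x - x = 0 := Submodule.disjoint_def'.1 huv _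
    (sub_mem (u.smul_mem r hx) hx) _ (v.neg_mem (v.smul_mem r hy)) hsplit
  exact ⟨r, sub_eq_zero.1 hzero, by rw [← neg_eq_zero, ← hsplit, hzero]⟩

theorem disjoint_sup_left (hc : IsComultiplication R M) {u v W : Submodule R M}
    (hu : Disjoint u W) (hv : Disjoint v W) : Disjoint (u ⊔ v) W := by
  refine Submodule.disjoint_def.2 fun e he heW ↦ ?_
  obtain ⟨x, hx, y, hy, rfl⟩ := Submodule.mem_sup.1 he
  obtain ⟨r, hr, hrx⟩ := hc.exists_smul_eq_self_and_smul_eq_zero hu.symm heW hx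
  obtain ⟨s, hs, hsy⟩ := hc.exists_smul_eq_self_and_smul_eq_zero hv.symm heW hy
  calc x + y = s • r • (x + y) := by rw [hr, hs]
    _ = 0 := by rw [smul_add, hrx, zero_add, smul_comm, hsy, smul_zero]

theorem not_isLarge_sup_of_disjoint (hc : IsComultiplication R M) {u v p m : Submodule R M}
    (hum : IsLarge (u ⊔ m)) (hpm : ¬ IsLarge (p ⊔ m)) (huv : Disjoint u v) :
    ¬ IsLarge (p ⊔ v) := by
  obtain ⟨D, hD, hpmD⟩ := not_isLarge_iff.1 hpm
  have huD : u ⊓ D ≠ ⊥ := fun h ↦ not_isLarge_iff.2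
    ⟨D, hD, hc.disjoint_sup_left (disjoint_iff.2 h) (hpmD.mono_left le_sup_right)⟩ hum
  exact not_isLarge_iff.2 ⟨u ⊓ D, huD, hc.disjoint_sup_left
    ((hpmD.mono_left le_sup_left).mono_right inf_le_right) (huv.symm.mono_right inf_le_left)⟩

end IsComultiplication

end Module

namespace largeSumGraph

variable {R M : Type*} [CommRing R] [AddCommGroup M] [Module R M]

theorem adj_iff {u v : LargeSumVtx R M} :
    (largeSumGraph R M).Adj u v ↔ u ≠ v ∧ ¬ IsLarge (u.1 ⊔ v.1) :=
  Iff.rfl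

theorem adj_of_lt {u v : LargeSumVtx R M} (huv : u.1 < v.1) : (largeSumGraph R M).Adj u v :=
  adj_iff.2 ⟨fun h ↦ huv.ne (congrArg Subtype.val h), by
    rw [sup_eq_right.2 huv.le]
    exact v.2.2⟩

theorem dist_le_one_of_not_isLarge_sup {u v : LargeSumVtx R M} (huv : ¬ IsLarge (u.1 ⊔ v.1)) :
    (largeSumGraph R M).dist u v ≤ 1 := by
  by_cases h : u = v
  · simp [h]
  · exact (SimpleGraph.dist_eq_one_iff_adj.2 (adj_iff.2 ⟨h, huv⟩)).le

theorem dist_le_two_of_inf_ne_bot {u v : LargeSumVtx R M} (huv : u.1 ⊓ v.1 ≠ ⊥) :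
    (largeSumGraph R M).dist u v ≤ 2 := by
  by_cases hlarge : IsLarge (u.1 ⊔ v.1)
  · let w : LargeSumVtx R M := ⟨u.1 ⊓ v.1, huv, mt (IsLarge.mono inf_le_left) u.2.2⟩
    have hwu : w.1 < u.1 := inf_lt_left.2 fun hle ↦ v.2.2 (sup_eq_right.2 hle ▸ hlarge)
    have hwv : w.1 < v.1 := inf_lt_right.2 fun hle ↦ u.2.2 (sup_eq_left.2 hle ▸ hlarge)
    exact (SimpleGraph.dist_le (.cons (adj_of_lt hwu).symm (.cons (adj_of_lt hwv) .nil))).trans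
      (by simp)
  · exact (dist_le_one_of_not_isLarge_sup hlarge).trans one_le_two

theorem dist_le_two_of_adj_of_adj_of_adj (hc : IsComultiplication R M)
    {u p a v : LargeSumVtx R M} (hup : (largeSumGraph R M).Adj u p)
    (hpa : (largeSumGraph R M).Adj p a) (hav : (largeSumGraph R M).Adj a v) :
    (largeSumGraph R M).dist u v ≤ 2 := by
  by_contra! h
  have hua : IsLarge (u.1 ⊔ a.1) := by
    by_contra hna
    have := hav.reachable.dist_triangle_right u
    have := dist_le_one_of_not_isLarge_sup hna
    rw [SimpleGraph.dist_eq_one_iff_adj.2 hav] at *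
    omega
  have hpv : IsLarge (p.1 ⊔ v.1) := by
    by_contra hnp
    have := hup.reachable.dist_triangle_left v
    have := dist_le_one_of_not_isLarge_sup hnp
    rw [SimpleGraph.dist_eq_one_iff_adj.2 hup] at *
    omega
  have huv : Disjoint u.1 v.1 := disjoint_iff.2 <| by
    by_contra hne
    exact h.not_ge (dist_le_two_of_inf_ne_bot hne)
  exact hc.not_isLarge_sup_of_disjoint hua (adj_iff.1 hpa).2 huv hpv

theorem dist_le_two_of_adj (hc : IsComultiplication R M) {u p v : LargeSumVtx R M}
    (hup : (largeSumGraph R M).Adj u p) (hpv : (largeSumGraph R M).Reachable p v)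
    (h : (largeSumGraph R M).dist p v ≤ 2) : (largeSumGraph R M).dist u v ≤ 2 := by
  obtain ⟨w, hw⟩ := hpv.exists_walk_length_eq_dist
  rcases w with _ | ⟨hpa, _ | ⟨hav, _ | ⟨_, _⟩⟩⟩
  · exact (SimpleGraph.dist_eq_one_iff_adj.2 hup).le.trans one_le_two
  · exact (SimpleGraph.dist_le (.cons hup (.cons hpa .nil))).trans (by simp)
  · exact dist_le_two_of_adj_of_adj_of_adj hc hup hpa hav
  · simp only [SimpleGraph.Walk.length_cons] at hw
    omega

end largeSumGraph

theorem stmt8_general {R M : Type*} [CommRing R] [AddCommGroup M] [Module R M]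
    (hc : IsComultiplication R M)
    (h : (largeSumGraph R M).Connected) :
    ∀ u v : LargeSumVtx R M, (largeSumGraph R M).dist u v ≤ 2 := by
  intro u v
  obtain ⟨w⟩ := h.preconnected u v
  induction w with
  | nil => simp
  | cons hup w ih => exact largeSumGraph.dist_le_two_of_adj hc hup w.reachable ih

/-- If the large sum graph of a nonzero comultiplication module is connected, its diameter is
at most `2`. -/
theorem stmt8 {R M : Type*} [CommRing R] [AddCommGroup M] [Module R M]
    [Nontrivial M] (hc : IsComultiplication R M)
    (h : (largeSumGraph R M).Connected) :
    ∀ u v : LargeSumVtx R M, (largeSumGraph R M).dist u v ≤ 2 :=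
  stmt8_general hc h
end

section
/- Let M be a nonzero comultiplication R-module with finitely many minimal submodules and at least two of them. Then no vertex of the large sum graph Ǵ(M) is adjacent to every other vertex; in particular Ǵ(M) is not a complete graph (when it has at least two vertices). -/
/-!
Let `N` be a vertex and let `U` be the sum of the minimal submodules not contained in `N`.
Since `N` is not large, some minimal submodule misses `N`, so `U ≠ N` and `U ≠ 0`; and `N + U`
contains every minimal submodule, hence is large because in a comultiplication module every
nonzero submodule contains a minimal one. Finally `U` is not large because it misses a minimal
submodule `T ≤ N`: the minimal submodules of a comultiplication module are determined by their
annihilators, which are maximal ideals, so each summand of `U` is killed by an element outside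
`𝔪 = Ann T`, i.e. `U` lies in the kernel of localization at `𝔪`, which meets `T` trivially.
-/

namespace Submodule

variable {R M : Type*} [CommRing R] [AddCommGroup M] [Module R M]

theorem isMaximal_annihilator_of_isAtom {T : Submodule R M} (hT : IsAtom T) :
    T.annihilator.IsMaximal :=
  have := isSimpleModule_iff_isAtom.mpr hT
  IsSimpleModule.annihilator_isMaximal

theorem span_singleton_eq_of_isAtom {T : Submodule R M} (hT : IsAtom T) {x : M} (hxT : x ∈ T)
    (hx : x ≠ 0) : R ∙ x = T :=
  (hT.le_iff.mp ((span_singleton_le_iff_mem x T).mpr hxT)).resolve_left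
    (span_singleton_eq_bot.not.mpr hx)

theorem isAtom_span_singleton_of_isMaximal {y : M} (hy : y ≠ 0) {𝔪 : Ideal R}
    (h𝔪 : 𝔪.IsMaximal) (h𝔪y : ∀ r ∈ 𝔪, r • y = 0) : IsAtom (R ∙ y) := by
  have htors : Ideal.torsionOf R M y = 𝔪 :=
    (h𝔪.eq_of_le ((Ideal.torsionOf_eq_top_iff R y).not.mpr hy)
      fun r hr => (Ideal.mem_torsionOf_iff y r).mpr (h𝔪y r hr)).symm
  rw [← isSimpleModule_iff_isAtom, isSimpleModule_iff_quot_maximal]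
  exact ⟨𝔪, h𝔪, ⟨htors ▸ (Ideal.quotTorsionOfEquivSpanSingleton R M y).symm⟩⟩

end Submodule

namespace IsComultiplication

variable {R M : Type*} [CommRing R] [AddCommGroup M] [Module R M]

theorem mem_iff_annihilator_smul_eq_zero (hc : IsComultiplication R M) (N : Submodule R M)
    (m : M) : m ∈ N ↔ ∀ r ∈ N.annihilator, r • m = 0 := by
  obtain ⟨I, hI⟩ := hc N
  refine ⟨fun hm r hr => Submodule.mem_annihilator.mp hr m hm, fun h => (hI m).mpr ?_⟩
  exact fun r hr => h r (Submodule.mem_annihilator.mpr fun n hn => (hI n).mp hn r hr)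

theorem eq_of_annihilator_eq (hc : IsComultiplication R M) {N K : Submodule R M}
    (h : N.annihilator = K.annihilator) : N = K := by
  ext m
  rw [hc.mem_iff_annihilator_smul_eq_zero N, hc.mem_iff_annihilator_smul_eq_zero K, h]

theorem exists_isAtom_le_s11 (hc : IsComultiplication R M) {N : Submodule R M} (hN : N ≠ ⊥) :
    ∃ T : Submodule R M, IsAtom T ∧ T ≤ N := by
  obtain ⟨x, hxN, hx⟩ := N.ne_bot_iff.mp hN
  obtain ⟨𝔪, h𝔪, htors⟩ :=
    Ideal.exists_le_maximal _ ((Ideal.torsionOf_eq_top_iff R x).not.mpr hx)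
  -- `P = 𝔪 x` is a proper submodule of `R x`; writing `P = (0 :_M J)`, some `a ∈ J` has
  -- `a x ≠ 0`, and `𝔪 (a x) = a (𝔪 x) = 0`.
  obtain ⟨J, hJ⟩ := hc (𝔪 • (R ∙ x))
  have hxP : x ∉ 𝔪 • (R ∙ x) := by
    intro hx𝔪
    obtain ⟨c, hc𝔪, hcx⟩ := Submodule.mem_smul_span_singleton.mp hx𝔪
    have h1c : 1 - c ∈ 𝔪 :=
      htors ((Ideal.mem_torsionOf_iff x _).mpr (by rw [sub_smul, one_smul, hcx, sub_self]))
    exact h𝔪.ne_top ((Ideal.eq_top_iff_one 𝔪).mpr (by simpa using 𝔪.add_mem h1c hc𝔪))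
  obtain ⟨a, haJ, hax⟩ : ∃ a ∈ J, a • x ≠ 0 := by
    simpa using mt (hJ x).mpr hxP
  refine ⟨R ∙ a • x, Submodule.isAtom_span_singleton_of_isMaximal hax h𝔪 fun r hr => ?_,
    (Submodule.span_singleton_le_iff_mem _ N).mpr (N.smul_mem a hxN)⟩
  rw [smul_comm]
  exact (hJ (r • x)).mp (Submodule.smul_mem_smul hr (Submodule.mem_span_singleton_self x)) a haJ

theorem isLarge_of_forall_isAtom_le (hc : IsComultiplication R M) {W : Submodule R M}
    (hW : ∀ T : Submodule R M, IsAtom T → T ≤ W) : IsLarge W := by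
  intro L hL hWL
  obtain ⟨T, hT, hTL⟩ := hc.exists_isAtom_le_s11 hL
  exact hT.1 (eq_bot_iff.mpr (hWL ▸ le_inf (hW T hT) hTL))

theorem disjoint_sSup_of_isAtom (hc : IsComultiplication R M) {T : Submodule R M}
    (hT : IsAtom T) {S : Set (Submodule R M)} (hS : ∀ A ∈ S, IsAtom A) (hTS : T ∉ S) :
    Disjoint T (sSup S) := by
  have h𝔪 := Submodule.isMaximal_annihilator_of_isAtom hT
  let K := LinearMap.ker (LocalizedModule.mkLinearMap T.annihilator.primeCompl M)
  have hSK : sSup S ≤ K := sSup_le fun A hA z hz => by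
    have hA𝔪 : ¬ A.annihilator ≤ T.annihilator := fun hle =>
      hTS (hc.eq_of_annihilator_eq
        ((Submodule.isMaximal_annihilator_of_isAtom (hS A hA)).eq_of_le h𝔪.ne_top hle) ▸ hA)
    obtain ⟨a, haA, haT⟩ := Set.not_subset.mp hA𝔪
    exact LocalizedModule.mem_ker_mkLinearMap_iff.mpr
      ⟨a, haT, Submodule.mem_annihilator.mp haA z hz⟩
  have hTK : Disjoint T K := Submodule.disjoint_def.mpr fun x hxT hxK => by
    by_contra hx
    obtain ⟨a, haT, hax⟩ := LocalizedModule.mem_ker_mkLinearMap_iff.mp hxK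
    apply haT
    rw [← Submodule.span_singleton_eq_of_isAtom hT hxT hx]
    exact (Submodule.mem_annihilator_span_singleton x a).mpr hax
  exact hTK.mono_right hSK

end IsComultiplication

theorem stmt11_general {R M : Type*} [CommRing R] [AddCommGroup M] [Module R M]
    (hc : IsComultiplication R M) :
    ∀ v : LargeSumVtx R M, ∃ u : LargeSumVtx R M, u ≠ v ∧ ¬ (largeSumGraph R M).Adj v u := by
  rintro ⟨N, hN, hNlarge⟩
  obtain ⟨L, hL, hNL⟩ : ∃ L : Submodule R M, L ≠ ⊥ ∧ N ⊓ L = ⊥ := by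
    simpa [IsLarge] using hNlarge
  obtain ⟨S, hS, hSL⟩ := hc.exists_isAtom_le_s11 hL
  obtain ⟨T, hT, hTN⟩ := hc.exists_isAtom_le_s11 hN
  set U := sSup {A : Submodule R M | IsAtom A ∧ ¬ A ≤ N}
  have hSN : ¬ S ≤ N := fun h => hS.1 (eq_bot_iff.mpr (hNL ▸ le_inf h hSL))
  have hSU : S ≤ U := le_sSup ⟨hS, hSN⟩
  have hTU : Disjoint T U :=
    hc.disjoint_sSup_of_isAtom hT (fun _ hA => hA.1) fun hT' => hT'.2 hTN
  refine ⟨⟨U, ne_bot_of_le_ne_bot hS.1 hSU, fun hU => hU T hT.1 hTU.symm.eq_bot⟩, ?_, ?_⟩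
  · intro hUN
    exact hSN (le_of_le_of_eq hSU (congrArg Subtype.val hUN))
  · rintro ⟨-, hNU⟩
    refine hNU (hc.isLarge_of_forall_isAtom_le fun A hA => ?_)
    by_cases hAN : A ≤ N
    · exact le_sup_of_le_left hAN
    · exact le_sup_of_le_right (le_sSup ⟨hA, hAN⟩)

/-- If a nonzero comultiplication module has finitely many minimal submodules and at least two
of them, then no vertex of the large sum graph is adjacent to every other vertex; in particular
the graph is not complete. -/
theorem stmt11 {R M : Type*} [CommRing R] [AddCommGroup M] [Module R M]
    [Nontrivial M] (hc : IsComultiplication R M)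
    (hfin : {S : Submodule R M | IsAtom S}.Finite)
    (S₁ S₂ : Submodule R M) (hS₁ : IsAtom S₁) (hS₂ : IsAtom S₂) (hne : S₁ ≠ S₂) :
    ∀ v : LargeSumVtx R M, ∃ u : LargeSumVtx R M, u ≠ v ∧ ¬ (largeSumGraph R M).Adj v u :=
  stmt11_general hc
end

section
/- Let M be a nonzero comultiplication R-module whose large sum graph Ǵ(M) is non-null, and let S₁, S₂ be two distinct minimal submodules of M. Then {S₁, S₂} is a dominating set of Ǵ(M); in particular the dominating number γ(Ǵ(M)) ≤ 2. -/
/-!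
A vertex `N` containing `S₁` or `S₂` is adjacent to it, since then `N + Sᵢ = N` is not large.
Otherwise `N` meets both atoms trivially. If `N + S₁` were large, it would contain the atom `S₂`;
writing `S₂ = (0 :_M I)` and `s = n + t` with `n ∈ N`, `t ∈ S₁`, every `r ∈ I` gives
`r n = -r t ∈ N ∩ S₁ = 0`, so `n ∈ N ∩ S₂ = 0` and `S₂ ≤ S₁`, forcing `S₁ = S₂`.
-/

section

variable {R M : Type*} [CommRing R] [AddCommGroup M] [Module R M]

theorem IsAtom.le_of_isLarge {S N : Submodule R M} (hS : IsAtom S) (hN : IsLarge N) : S ≤ N :=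
  hS.not_disjoint_iff_le.mp fun h => hN S hS.ne_bot (by rw [inf_comm]; exact h.eq_bot)

theorem Submodule.torsionBySet_le_of_le_sup {N K : Submodule R M} {s : Set R}
    (hNK : Disjoint N K) (hN : Disjoint N (torsionBySet R M s))
    (h : torsionBySet R M s ≤ N ⊔ K) : torsionBySet R M s ≤ K := by
  intro x hx
  obtain ⟨n, hn, k, hk, rfl⟩ := mem_sup.mp (h hx)
  have hn_tors : n ∈ torsionBySet R M s := by
    refine (mem_torsionBySet_iff _ _).mpr fun a => ?_
    have hsum : (a : R) • n = -((a : R) • k) :=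
      eq_neg_of_add_eq_zero_left (by rw [← smul_add]; exact (mem_torsionBySet_iff _ _).mp hx a)
    refine (Submodule.disjoint_def.mp hNK) _ (smul_mem _ _ hn) ?_
    rw [hsum]
    exact neg_mem (smul_mem _ _ hk)
  rw [Submodule.disjoint_def.mp hN n hn hn_tors, zero_add]
  exact hk

theorem IsComultiplication.le_of_le_sup {N S T : Submodule R M} (hc : IsComultiplication R M)
    (hNS : Disjoint N S) (hNT : Disjoint N T) (h : T ≤ N ⊔ S) : T ≤ S := by
  obtain ⟨I, hI⟩ := hc T
  have hT : T = Submodule.torsionBySet R M I := by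
    ext m
    simp [Submodule.mem_torsionBySet_iff, hI]
  rw [hT] at hNT h ⊢
  exact Submodule.torsionBySet_le_of_le_sup hNS hNT h

theorem IsComultiplication.not_isLarge_sup_of_isAtom {N S T : Submodule R M}
    (hc : IsComultiplication R M) (hS : IsAtom S) (hT : IsAtom T) (hST : S ≠ T)
    (hNS : Disjoint N S) (hNT : Disjoint N T) : ¬ IsLarge (N ⊔ S) := fun hl =>
  hST ((hS.le_iff_eq hT.ne_bot).mp (hc.le_of_le_sup hNS hNT (hT.le_of_isLarge hl))).symm

end

theorem stmt17_general {R M : Type*} [CommRing R] [AddCommGroup M] [Module R M]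
    (hc : IsComultiplication R M)
    (S₁ S₂ : Submodule R M) (hS₁ : IsAtom S₁) (hS₂ : IsAtom S₂) (hne : S₁ ≠ S₂) :
    ∀ v : LargeSumVtx R M, v.1 = S₁ ∨ v.1 = S₂ ∨
      ¬ IsLarge (v.1 ⊔ S₁) ∨ ¬ IsLarge (v.1 ⊔ S₂) := by
  intro v
  by_cases h₁ : S₁ ≤ v.1
  · exact .inr <| .inr <| .inl <| (sup_eq_left.mpr h₁).symm ▸ v.2.2
  by_cases h₂ : S₂ ≤ v.1
  · exact .inr <| .inr <| .inr <| (sup_eq_left.mpr h₂).symm ▸ v.2.2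
  have hv₁ : Disjoint v.1 S₁ := (hS₁.not_le_iff_disjoint.mp h₁).symm
  have hv₂ : Disjoint v.1 S₂ := (hS₂.not_le_iff_disjoint.mp h₂).symm
  exact .inr <| .inr <| .inl <| hc.not_isLarge_sup_of_isAtom hS₁ hS₂ hne hv₁ hv₂

/-- If `S₁ ≠ S₂` are minimal submodules of a nonzero comultiplication module with non-null large
sum graph, then `{S₁, S₂}` is a dominating set: every vertex equals `S₁` or `S₂`, or is adjacent
to one of them. In particular the dominating number is at most `2`. -/
theorem stmt17 {R M : Type*} [CommRing R] [AddCommGroup M] [Module R M]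
    [Nontrivial M] (hc : IsComultiplication R M)
    [Nonempty (LargeSumVtx R M)]
    (S₁ S₂ : Submodule R M) (hS₁ : IsAtom S₁) (hS₂ : IsAtom S₂) (hne : S₁ ≠ S₂) :
    ∀ v : LargeSumVtx R M, v.1 = S₁ ∨ v.1 = S₂ ∨
      ¬ IsLarge (v.1 ⊔ S₁) ∨ ¬ IsLarge (v.1 ⊔ S₂) :=
  stmt17_general hc S₁ S₂ hS₁ hS₂ hne
end
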